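/- With G(n) the n×n Hankel matrix with entries 1/g_{i+j+a}, g_m = p^{2m} binom(m+q/p, m), the determinant of G(n)^{-1} equals the product over k from 0 to n-1 of p^{2(2k+a)} * ((2kp+ap+q)/q) * binom(2k+a+q/p-1, k) * binom(2k+a+q/p-1, k+a). -/

import Mathlib

/-- Generalized binomial coefficient `x(x-1)⋯(x-n+1)/n!` for rational `x`. -/
noncomputable def gchoose (x : ℚ) (n : ℕ) : ℚ :=
  (∏ i ∈ Finset.range n, (x - i)) / (n.factorial : ℚ)

/-- The generalized Catalan numbers `g_m = p^{2m} binom(m + q/p, m)`. -/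
noncomputable def gcat (p q : ℤ) (m : ℕ) : ℚ :=
  (p : ℚ) ^ (2 * m) * gchoose ((m : ℚ) + (q : ℚ) / (p : ℚ)) m

/-- The `n × n` Hankel matrix `G(n)` with entries `1/g_{i+j+a}`. -/
noncomputable def GHankel (p q : ℤ) (a n : ℕ) : Matrix (Fin n) (Fin n) ℚ :=
  Matrix.of fun i j => 1 / gcat p q ((i : ℕ) + (j : ℕ) + a)

/-!
With `x = q/p` one has `1/g_m = x p^{-2m} · m!/(x)_{m+1}`, where `(x)_k = x(x+1)⋯(x+k-1)`, so
after scaling rows and columns by powers of `p` the matrix `G(n)` becomes the Hankel matrix of the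
Beta values `B(m+1, x) = m!/(x)_{m+1}`, `m = i + j + a`. Multiplying that matrix on the right by the
upper triangular matrix with entries `(-1)^{l-j} C(l,j) (x)_{a+l+j}/(a+j)!` makes it lower
triangular: entry `(i, l)` is the `l`-th forward difference at `0` of
`j ↦ (i+j+a)!/(a+j)! · (x)_{a+l+j}/(x)_{i+j+a+1}`. For `i < l` this is a polynomial in `j` of
degree `< l`, so the difference vanishes; for `i = l` it is a polynomial of degree `l` divided by
`x+a+l+j`, and partial fractions evaluate the difference. The determinant is then the product of
the diagonal entries of the two triangular matrices.
-/

open Finset Polynomial fwdDiff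
open scoped Nat

section Pochhammer

theorem ascPochhammer_eval_add {S : Type*} [CommSemiring S] (x : S) (m n : ℕ) :
    (ascPochhammer S (m + n)).eval x
      = (ascPochhammer S m).eval x * (ascPochhammer S n).eval (x + m) := by
  rw [← ascPochhammer_mul, eval_mul, eval_comp]
  simp

theorem ascPochhammer_eval_one_sub_sub {R : Type*} [CommRing R] (x : R) (n : ℕ) :
    (ascPochhammer R n).eval (1 - x - n) = (-1) ^ n * (ascPochhammer R n).eval x := by
  rw [show 1 - x - n = -(x + n - 1) by ring, ascPochhammer_eval_neg_eq_descPochhammer,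
    descPochhammer_eval_eq_ascPochhammer]
  ring_nf

theorem ascPochhammer_eval_ne_zero {R : Type*} [CommRing R] [IsDomain R] {x : R}
    (hx : ∀ k : ℕ, x + k ≠ 0) (n : ℕ) : (ascPochhammer R n).eval x ≠ 0 := by
  rw [ne_eq, ascPochhammer_eval_eq_zero_iff]
  rintro ⟨k, -, hk⟩
  exact hx k (by rw [hk]; ring)

theorem ascPochhammer_eval_add_div {K : Type*} [Field K] {x : K} (hx : ∀ k : ℕ, x + k ≠ 0)
    (m n : ℕ) :
    (ascPochhammer K (m + n)).eval x / (ascPochhammer K m).eval x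
      = (ascPochhammer K n).eval (x + m) := by
  rw [ascPochhammer_eval_add, mul_div_cancel_left₀ _ (ascPochhammer_eval_ne_zero hx m)]

theorem natCast_factorial_add_div_factorial {K : Type*} [Field K] [CharZero K] (r n : ℕ) :
    ((r + n)! : K) / r ! = (ascPochhammer K n).eval (r + 1 : K) := by
  rw [← factorial_mul_ascPochhammer,
    mul_div_cancel_left₀ _ (Nat.cast_ne_zero.2 (Nat.factorial_ne_zero r))]

end Pochhammer

section ForwardDifference

theorem sum_fin_neg_one_pow_choose_mul_eq_fwdDiff_iter {R : Type*} [CommRing R] (f : ℕ → R)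
    {l n : ℕ} (hl : l < n) :
    ∑ j : Fin n, (-1) ^ (l - j) * (l.choose j : R) * f j = (Δ_[1])^[l] f 0 := by
  set g : ℕ → R := fun j => (-1) ^ (l - j) * (l.choose j : R) * f j
  have hvanish : ∑ j ∈ range (l + 1), g j = ∑ j ∈ range n, g j :=
    sum_subset (range_subset_range.2 hl) fun j _ hj => by
      simp [g, Nat.choose_eq_zero_of_lt (by simpa using hj : l < j)]
  rw [Fin.sum_univ_eq_sum_range g, ← hvanish, fwdDiff_iter_eq_sum_shift]
  simp [g, zsmul_eq_mul]

theorem Polynomial.fwdDiff_iter_eval_natCast_eq_zero {R : Type*} [CommRing R] {P : R[X]}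
    {n : ℕ} (hP : P.degree < n) : (Δ_[1])^[n] (fun k : ℕ => P.eval (k : R)) 0 = 0 := by
  rcases eq_or_ne P 0 with rfl | hP0
  · simp [fwdDiff_iter_eq_sum_shift]
  have h := congr_fun
    (P.fwdDiff_iter_eq_zero_of_degree_lt ((natDegree_lt_iff_degree_lt hP0).2 hP)) 0
  simpa [fwdDiff_iter_eq_sum_shift] using h

variable {K : Type*} [Field K] {y : K}

theorem fwdDiff_factorial_div_ascPochhammer (hy : ∀ k : ℕ, y + k ≠ 0) (m : ℕ) :
    Δ_[1] (fun k : ℕ => (m ! : K) / (ascPochhammer K (m + 1)).eval (y + k))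
      = fun k : ℕ => -(((m + 1)! : K) / (ascPochhammer K (m + 2)).eval (y + k)) := by
  funext k
  have hshift : ∀ i j : ℕ, y + i + j ≠ 0 := fun i j => by simpa [add_assoc] using hy (i + j)
  have hk := hy k
  have hP := ascPochhammer_eval_ne_zero (hshift k) (m + 1)
  have hP1 := ascPochhammer_eval_ne_zero (hshift (k + 1)) (m + 1)
  have hleft : (ascPochhammer K (m + 2)).eval (y + k)
      = (y + k) * (ascPochhammer K (m + 1)).eval (y + ↑(k + 1)) := by
    rw [ascPochhammer_succ_left, eval_mul, eval_comp]
    simp [add_assoc]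
  have key := hleft.symm.trans (ascPochhammer_succ_eval (m + 1) (y + k))
  simp only [fwdDiff, hleft, Nat.factorial_succ]
  generalize (ascPochhammer K (m + 1)).eval (y + ↑(k + 1)) = P1 at *
  generalize (ascPochhammer K (m + 1)).eval (y + k) = P at *
  push_cast at *
  field_simp
  linear_combination -(m ! : K) * key

theorem fwdDiff_iter_inv_add (hy : ∀ k : ℕ, y + k ≠ 0) (n : ℕ) :
    (Δ_[1])^[n] (fun k : ℕ => (y + k)⁻¹)
      = fun k : ℕ => (-1) ^ n * ((n ! : K) / (ascPochhammer K (n + 1)).eval (y + k)) := by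
  induction n with
  | zero => funext k; simp
  | succ n ih =>
    rw [Function.iterate_succ_apply', ih,
      show (fun k : ℕ => (-1) ^ n * ((n ! : K) / (ascPochhammer K (n + 1)).eval (y + k)))
        = (-1 : K) ^ n • fun k : ℕ => (n ! : K) / (ascPochhammer K (n + 1)).eval (y + k)
        from rfl,
      fwdDiff_const_smul, fwdDiff_factorial_div_ascPochhammer hy]
    funext k
    simp [pow_succ]

theorem fwdDiff_iter_eval_div_add (hy : ∀ k : ℕ, y + k ≠ 0) {A : K[X]} {n : ℕ}
    (hA : A.natDegree ≤ n) :
    (Δ_[1])^[n] (fun k : ℕ => A.eval (k : K) / (y + k)) 0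
      = A.eval (-y) * (-1) ^ n * n ! / (ascPochhammer K (n + 1)).eval y := by
  rcases eq_or_ne A 0 with rfl | hA0
  · simp [fwdDiff_iter_eq_sum_shift]
  set Q := A /ₘ (X - C (-y))
  have hQ : Q.degree < n :=
    (degree_divByMonic_lt _ _ hA0 (by simp)).trans_le
      (degree_le_natDegree.trans (by exact_mod_cast hA))
  have hsplit : (fun k : ℕ => A.eval (k : K) / (y + k))
      = A.eval (-y) • (fun k : ℕ => (y + k)⁻¹) + fun k : ℕ => Q.eval (k : K) := by
    funext k
    have hdiv := modByMonic_add_div A (X - C (-y))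
    rw [modByMonic_X_sub_C_eq_C_eval] at hdiv
    have hk := hy k
    conv_lhs => rw [← hdiv]
    simp only [eval_add, eval_C, eval_mul, eval_sub, eval_X, Pi.add_apply, Pi.smul_apply,
      smul_eq_mul]
    field_simp
    ring
  rw [hsplit, fwdDiff_iter_add, fwdDiff_iter_const_smul, fwdDiff_iter_inv_add hy, Pi.add_apply,
    fwdDiff_iter_eval_natCast_eq_zero hQ]
  simp [mul_assoc, mul_div_assoc]

end ForwardDifference

section BetaHankel

variable {K : Type*} [Field K] {x : K}

noncomputable def betaHankel (x : K) (a n : ℕ) : Matrix (Fin n) (Fin n) K :=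
  Matrix.of fun i j => ((i + j + a : ℕ)! : K) / (ascPochhammer K (i + j + a + 1)).eval x

-- For `j > l` the truncated exponent `l - j` is harmless: `l.choose j = 0`.
noncomputable def betaHankelReducer (x : K) (a n : ℕ) : Matrix (Fin n) (Fin n) K :=
  Matrix.of fun j l => (-1) ^ ((l : ℕ) - j) * ((l : ℕ).choose j : K)
    * ((ascPochhammer K (a + l + j)).eval x / ((a + j : ℕ)! : K))

theorem betaHankelReducer_isUpperTriangular (x : K) (a n : ℕ) :
    (betaHankelReducer x a n).IsUpperTriangular := fun j l hlj => by
  simp [betaHankelReducer, Nat.choose_eq_zero_of_lt (show (l : ℕ) < j from hlj)]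

theorem betaHankelReducer_apply_self (x : K) (a n : ℕ) (l : Fin n) :
    betaHankelReducer x a n l l
      = (ascPochhammer K (a + 2 * l)).eval x / ((a + l : ℕ)! : K) := by
  simp [betaHankelReducer, two_mul, add_assoc]

theorem betaHankel_mul_reducer_apply (x : K) (a n : ℕ) (i l : Fin n) :
    (betaHankel x a n * betaHankelReducer x a n) i l
      = (Δ_[1])^[l] (fun j : ℕ =>
          ((i + j + a : ℕ)! : K) / (ascPochhammer K (i + j + a + 1)).eval x
            * ((ascPochhammer K (a + l + j)).eval x / ((a + j : ℕ)! : K))) 0 := by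
  rw [← sum_fin_neg_one_pow_choose_mul_eq_fwdDiff_iter _ l.isLt, Matrix.mul_apply]
  refine sum_congr rfl fun j _ => ?_
  simp only [betaHankel, betaHankelReducer, Matrix.of_apply]
  ring

variable [CharZero K]

theorem betaHankel_mul_reducer_apply_of_lt (hx : ∀ k : ℕ, x + k ≠ 0) (a n : ℕ) {i l : Fin n}
    (hil : i < l) : (betaHankel x a n * betaHankelReducer x a n) i l = 0 := by
  set P : K[X] := (ascPochhammer K i).comp (X + C ((a : K) + 1))
    * (ascPochhammer K (l - 1 - i)).comp (X + C (x + (i + a + 1 : ℕ)))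
  have hP : P.degree < (l : ℕ) := by
    refine degree_le_natDegree.trans_lt ?_
    calc (P.natDegree : WithBot ℕ) ≤ (i + (l - 1 - i) : ℕ) := by
          exact_mod_cast natDegree_mul_le.trans (by
            simp only [natDegree_comp, ascPochhammer_natDegree, natDegree_X_add_C, mul_one]; rfl)
      _ < (l : ℕ) := by exact_mod_cast (by omega : i + (l - 1 - i) < (l : ℕ))
  rw [betaHankel_mul_reducer_apply, ← fwdDiff_iter_eval_natCast_eq_zero hP]
  refine congrArg (fun f => (Δ_[1])^[l] f 0) (funext fun j => ?_)
  have hfac := natCast_factorial_add_div_factorial (K := K) (a + j) i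
  have hpoch := ascPochhammer_eval_add_div hx (i + j + a + 1) (l - 1 - i)
  rw [show a + j + i = i + j + a by ring] at hfac
  rw [show i + j + a + 1 + (l - 1 - i) = a + l + j by omega] at hpoch
  simp only [P, eval_mul, eval_comp, eval_add, eval_X, eval_C]
  rw [div_mul_div_comm, mul_comm ((ascPochhammer K (i + j + a + 1)).eval x), ← div_mul_div_comm,
    hfac, hpoch]
  push_cast
  ring_nf

theorem betaHankel_mul_reducer_apply_self (hx : ∀ k : ℕ, x + k ≠ 0) (a n : ℕ) (l : Fin n) :
    (betaHankel x a n * betaHankelReducer x a n) l l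
      = (l ! : K) * (ascPochhammer K l).eval x * (ascPochhammer K (a + l)).eval x
          / (ascPochhammer K (a + 2 * l + 1)).eval x := by
  set y : K := x + (a + l : ℕ)
  have hy : ∀ k : ℕ, y + k ≠ 0 := fun k => by simpa [y, add_assoc] using hx (a + l + k)
  set A : K[X] := (ascPochhammer K l).comp (X + C ((a : K) + 1))
  have hA : A.natDegree ≤ l := by
    rw [natDegree_comp, ascPochhammer_natDegree, natDegree_X_add_C, mul_one]
  have hsummand : ∀ j : ℕ, ((l + j + a : ℕ)! : K) / (ascPochhammer K (l + j + a + 1)).eval x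
        * ((ascPochhammer K (a + l + j)).eval x / ((a + j : ℕ)! : K))
      = A.eval (j : K) / (y + j) := by
    intro j
    have hfac := natCast_factorial_add_div_factorial (K := K) (a + j) l
    rw [show a + j + l = l + j + a by ring] at hfac
    have hpoch := ascPochhammer_eval_ne_zero hx (a + l + j)
    have hfac0 : ((a + j : ℕ)! : K) ≠ 0 := Nat.cast_ne_zero.2 (Nat.factorial_ne_zero _)
    have hxj := hx (a + l + j)
    rw [show l + j + a + 1 = a + l + j + 1 by ring, ascPochhammer_succ_eval]
    calc _ = ((l + j + a : ℕ)! : K) / ((a + j : ℕ)! : K) / (x + (a + l + j : ℕ)) := by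
          field_simp
      _ = A.eval (j : K) / (y + j) := by
          rw [hfac]
          simp only [A, y, eval_comp, eval_add, eval_X, eval_C]
          push_cast
          ring_nf
  have hAy : A.eval (-y) = (-1) ^ (l : ℕ) * (ascPochhammer K l).eval x := by
    rw [← ascPochhammer_eval_one_sub_sub]
    simp only [A, y, eval_comp, eval_add, eval_X, eval_C]
    push_cast
    ring_nf
  have hyPoch : (ascPochhammer K (l + 1)).eval y
      = (ascPochhammer K (a + 2 * l + 1)).eval x / (ascPochhammer K (a + l)).eval x := by
    rw [← ascPochhammer_eval_add_div hx (a + l) (l + 1),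
      show a + l + (l + 1) = a + 2 * l + 1 by ring]
  rw [betaHankel_mul_reducer_apply, funext hsummand, fwdDiff_iter_eval_div_add hy hA, hAy, hyPoch]
  have h1 := ascPochhammer_eval_ne_zero hx (a + l)
  have h2 := ascPochhammer_eval_ne_zero hx (a + 2 * l + 1)
  field_simp
  ring_nf
  rw [pow_mul', neg_one_sq, one_pow, mul_one]

theorem det_betaHankel (hx : ∀ k : ℕ, x + k ≠ 0) (a n : ℕ) :
    (betaHankel x a n).det = ∏ k ∈ range n,
      (k ! : K) * ((a + k)! : K) * (ascPochhammer K k).eval x * (ascPochhammer K (a + k)).eval x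
        / ((ascPochhammer K (a + 2 * k)).eval x * (ascPochhammer K (a + 2 * k + 1)).eval x) := by
  set B := betaHankelReducer x a n
  have hB : B.det = ∏ l : Fin n, (ascPochhammer K (a + 2 * l)).eval x / ((a + l : ℕ)! : K) := by
    rw [Matrix.det_of_isUpperTriangular (betaHankelReducer_isUpperTriangular x a n)]
    exact prod_congr rfl fun l _ => betaHankelReducer_apply_self x a n l
  have hB0 : B.det ≠ 0 := by
    rw [hB]
    exact prod_ne_zero_iff.2 fun l _ => div_ne_zero (ascPochhammer_eval_ne_zero hx _)
      (Nat.cast_ne_zero.2 (Nat.factorial_ne_zero _))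
  have hHB : (betaHankel x a n * B).IsLowerTriangular := fun i l hil =>
    betaHankel_mul_reducer_apply_of_lt hx a n hil
  have hdet := Matrix.det_of_isLowerTriangular _ hHB
  rw [Matrix.det_mul, ← eq_div_iff hB0, hB, ← prod_div_distrib] at hdet
  rw [hdet, ← Fin.prod_univ_eq_prod_range]
  refine prod_congr rfl fun l _ => ?_
  rw [betaHankel_mul_reducer_apply_self hx]
  have h1 := ascPochhammer_eval_ne_zero hx (a + 2 * l)
  have h2 : ((a + l : ℕ)! : K) ≠ 0 := Nat.cast_ne_zero.2 (Nat.factorial_ne_zero _)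
  field_simp

end BetaHankel

theorem gchoose_eq_ascPochhammer (y : ℚ) (n : ℕ) :
    gchoose y n = (ascPochhammer ℚ n).eval (y - n + 1) / n ! := by
  rw [gchoose, ← descPochhammer_eval_eq_prod_range, descPochhammer_eval_eq_ascPochhammer]

theorem gchoose_eq_ascPochhammer_div {x : ℚ} (hx : ∀ k : ℕ, x + k ≠ 0) (m n : ℕ) :
    gchoose (x + (m + n : ℕ) - 1) n
      = (ascPochhammer ℚ (m + n)).eval x / ((ascPochhammer ℚ m).eval x * n !) := by
  rw [gchoose_eq_ascPochhammer, div_mul_eq_div_div, ascPochhammer_eval_add_div hx]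
  congr 2
  push_cast
  ring

theorem intCast_div_add_natCast_ne_zero {p q : ℤ} (hp : p ≠ 0) (hpq : ¬ p ∣ q) (k : ℕ) :
    (q : ℚ) / p + k ≠ 0 := by
  intro h
  refine hpq ⟨-k, ?_⟩
  have hp' : (p : ℚ) ≠ 0 := by exact_mod_cast hp
  field_simp at h
  exact_mod_cast (by linear_combination h : (q : ℚ) = p * -k)

theorem one_div_gcat {p q : ℤ} (hx : ∀ k : ℕ, (q : ℚ) / p + k ≠ 0) (m : ℕ) :
    1 / gcat p q m = (q : ℚ) / p * ((p : ℚ) ^ 2)⁻¹ ^ m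
      * ((m ! : ℚ) / (ascPochhammer ℚ (m + 1)).eval ((q : ℚ) / p)) := by
  have h := gchoose_eq_ascPochhammer_div hx 1 m
  rw [show (q : ℚ) / p + (1 + m : ℕ) - 1 = m + q / p by push_cast; ring, add_comm 1 m] at h
  have hx0 : (q : ℚ) / p ≠ 0 := by simpa using hx 0
  have hpoch := ascPochhammer_eval_ne_zero hx (m + 1)
  rw [gcat, h, ascPochhammer_one, eval_X, pow_mul, inv_pow]
  field_simp

theorem det_GHankel {p q : ℤ} (hx : ∀ k : ℕ, (q : ℚ) / p + k ≠ 0) (a n : ℕ) :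
    (GHankel p q a n).det
      = (∏ k ∈ range n, (q : ℚ) / p * ((p : ℚ) ^ 2)⁻¹ ^ (a + 2 * k))
        * (betaHankel ((q : ℚ) / p) a n).det := by
  set u : ℚ := ((p : ℚ) ^ 2)⁻¹
  set H := betaHankel ((q : ℚ) / p) a n
  have hG : GHankel p q a n = Matrix.of fun i j : Fin n => (q / p * u ^ a * u ^ (i : ℕ))
      * (Matrix.of fun i' j' : Fin n => u ^ (j' : ℕ) * H i' j') i j := by
    ext i j
    simp only [H, GHankel, betaHankel, Matrix.of_apply, one_div_gcat hx, pow_add]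
    ring
  rw [hG, Matrix.det_mul_column, Matrix.det_mul_row, ← mul_assoc, ← prod_mul_distrib,
    Fin.prod_univ_eq_prod_range (fun k => q / p * u ^ a * u ^ k * u ^ k)]
  congr 1
  refine prod_congr rfl fun k _ => ?_
  ring

theorem catbert_factor_eq_inv {p q : ℤ} (hx : ∀ k : ℕ, (q : ℚ) / p + k ≠ 0) (a k : ℕ) :
    (p : ℚ) ^ (2 * (2 * k + a)) * ((2 * (k : ℚ) * p + a * p + q) / (q : ℚ))
        * gchoose (2 * (k : ℚ) + (a : ℚ) + (q : ℚ) / (p : ℚ) - 1) k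
        * gchoose (2 * (k : ℚ) + (a : ℚ) + (q : ℚ) / (p : ℚ) - 1) (k + a)
      = ((q : ℚ) / p * ((p : ℚ) ^ 2)⁻¹ ^ (a + 2 * k)
          * ((k ! : ℚ) * ((a + k)! : ℚ) * (ascPochhammer ℚ k).eval ((q : ℚ) / p)
              * (ascPochhammer ℚ (a + k)).eval ((q : ℚ) / p)
            / ((ascPochhammer ℚ (a + 2 * k)).eval ((q : ℚ) / p)
              * (ascPochhammer ℚ (a + 2 * k + 1)).eval ((q : ℚ) / p))))⁻¹ := by
  obtain ⟨hq, hp⟩ : (q : ℚ) ≠ 0 ∧ (p : ℚ) ≠ 0 := by simpa using hx 0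
  have h1 := gchoose_eq_ascPochhammer_div hx (a + k) k
  have h2 := gchoose_eq_ascPochhammer_div hx k (k + a)
  rw [show (q : ℚ) / p + (a + k + k : ℕ) - 1 = 2 * k + a + q / p - 1 by push_cast; ring,
    show a + k + k = a + 2 * k by ring] at h1
  rw [show (q : ℚ) / p + (k + (k + a) : ℕ) - 1 = 2 * k + a + q / p - 1 by push_cast; ring,
    show k + (k + a) = a + 2 * k by ring, show k + a = a + k by ring] at h2
  rw [h1, add_comm k a, h2, ascPochhammer_succ_eval, inv_pow, ← pow_mul,
    show 2 * (a + 2 * k) = 2 * (2 * k + a) by ring]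
  have hP1 := ascPochhammer_eval_ne_zero hx k
  have hP2 := ascPochhammer_eval_ne_zero hx (a + k)
  have hP3 := ascPochhammer_eval_ne_zero hx (a + 2 * k)
  have hP4 := hx (a + 2 * k)
  field_simp
  push_cast
  ring

theorem catbert_det_inverse_general (p q : ℤ) (a n : ℕ) (hp : 2 ≤ p) (hq : Int.gcd p q = 1) :
    ((GHankel p q a n)⁻¹).det
      = ∏ k ∈ Finset.range n,
          (p : ℚ) ^ (2 * (2 * k + a))
            * ((2 * (k : ℚ) * p + a * p + q) / (q : ℚ))
            * gchoose (2 * (k : ℚ) + (a : ℚ) + (q : ℚ) / (p : ℚ) - 1) k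
            * gchoose (2 * (k : ℚ) + (a : ℚ) + (q : ℚ) / (p : ℚ) - 1) (k + a) := by
  have hpq : ¬ p ∣ q := fun h => by
    have := Int.isUnit_iff.1 ((Int.isCoprime_iff_gcd_eq_one.2 hq).isUnit_of_dvd h)
    omega
  have hx := intCast_div_add_natCast_ne_zero (by omega) hpq
  rw [Matrix.det_nonsing_inv, Ring.inverse_eq_inv', det_GHankel hx, det_betaHankel hx,
    ← prod_mul_distrib, ← prod_inv_distrib]
  exact prod_congr rfl fun k _ => (catbert_factor_eq_inv hx a k).symm

/-- Determinant of `G(n)⁻¹`. -/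
theorem catbert_det_inverse (p q : ℤ) (a n : ℕ) (hp : 2 ≤ p) (hq : Int.gcd p q = 1)
    (hG : IsUnit (GHankel p q a n)) :
    ((GHankel p q a n)⁻¹).det
      = ∏ k ∈ Finset.range n,
          (p : ℚ) ^ (2 * (2 * k + a))
            * ((2 * (k : ℚ) * p + a * p + q) / (q : ℚ))
            * gchoose (2 * (k : ℚ) + (a : ℚ) + (q : ℚ) / (p : ℚ) - 1) k
            * gchoose (2 * (k : ℚ) + (a : ℚ) + (q : ℚ) / (p : ℚ) - 1) (k + a) :=
  catbert_det_inverse_general p q a n hp hq
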